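/- Let Δ₁ ⊆ Δ₂ be two polytopes in M_ℚ. Then (Δ₁, Δ₂) is a good pair (i.e. Δ₁ and Δ₂* are canonical polytopes) if and only if Δ₁ and Δ₂* are lattice polytopes containing the origin as an interior point. -/

import Mathlib

open Finset

variable {d : ℕ}

noncomputable section

/-- The standard pairing on `ℝ^d`. -/
def pairR (x y : Fin d → ℝ) : ℝ := ∑ i, x i * y i

/-- The polar of a subset of `ℝ^d`. -/
def polar (Δ : Set (Fin d → ℝ)) : Set (Fin d → ℝ) :=
  {y | ∀ x ∈ Δ, pairR x y ≥ -1}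

/-- A point of the standard lattice `ℤ^d ⊆ ℝ^d`. -/
def IsLatticePt (x : Fin d → ℝ) : Prop := ∀ i, ∃ z : ℤ, x i = (z : ℝ)

/-- A polytope: the convex hull of finitely many points. -/
def IsPolytope (Δ : Set (Fin d → ℝ)) : Prop :=
  ∃ S : Finset (Fin d → ℝ), Δ = convexHull ℝ (S : Set (Fin d → ℝ))

/-- A lattice polytope: the convex hull of finitely many lattice points. -/
def IsLatticePolytope (Δ : Set (Fin d → ℝ)) : Prop :=
  ∃ S : Finset (Fin d → ℝ), (∀ x ∈ S, IsLatticePt x) ∧ Δ = convexHull ℝ (S : Set (Fin d → ℝ))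

/-- A canonical polytope: a lattice polytope whose unique interior lattice point
is the origin. -/
def IsCanonical (Δ : Set (Fin d → ℝ)) : Prop :=
  IsLatticePolytope Δ ∧ (0 : Fin d → ℝ) ∈ interior Δ ∧
    ∀ x ∈ interior Δ, IsLatticePt x → x = 0

/-- A good pair: `Δ₁ ⊆ Δ₂` with `Δ₁` and `Δ₂*` canonical. -/
def IsGoodPair (Δ₁ Δ₂ : Set (Fin d → ℝ)) : Prop :=
  Δ₁ ⊆ Δ₂ ∧ IsCanonical Δ₁ ∧ IsCanonical (polar Δ₂)

/-! If `P` is a lattice polytope with the origin in its interior and `v` is a lattice point in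
the interior of `P*`, then `(1 + δ) v ∈ P*` for some `δ > 0`. On each vertex `s` of `P` the
pairing `⟨s, v⟩` is an integer with `(1 + δ) ⟨s, v⟩ ≥ -1`, hence `⟨s, v⟩ ≥ 0`; so `⟨·, v⟩ ≥ 0`
on all of `P`, which forces `v = 0` as `P` is a neighbourhood of the origin. Both halves of the
theorem are instances of this: `Δ₁` sits inside `Δ₂ ⊆ Δ₂**`, and `Δ₂*` inside `Δ₁*`. -/

lemma pairR_eq_dotProduct (x y : Fin d → ℝ) : pairR x y = x ⬝ᵥ y := rfl

lemma subset_polar_polar (Δ : Set (Fin d → ℝ)) : Δ ⊆ polar (polar Δ) := fun x hx _ hy => by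
  simpa only [pairR_eq_dotProduct, dotProduct_comm] using hy x hx

lemma polar_anti {Δ₁ Δ₂ : Set (Fin d → ℝ)} (h : Δ₁ ⊆ Δ₂) : polar Δ₂ ⊆ polar Δ₁ :=
  fun _ hy x hx => hy x (h hx)

lemma IsLatticePt.exists_dotProduct_eq_intCast {x y : Fin d → ℝ} (hx : IsLatticePt x)
    (hy : IsLatticePt y) : ∃ z : ℤ, x ⬝ᵥ y = z := by
  choose zx hzx using hx
  choose zy hzy using hy
  exact ⟨zx ⬝ᵥ zy, by simp [dotProduct, hzx, hzy]⟩

lemma Int.cast_nonneg_of_neg_one_le_one_add_mul {z : ℤ} {δ : ℝ} (hδ : 0 < δ)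
    (h : -1 ≤ (1 + δ) * z) : (0 : ℝ) ≤ z := by
  by_contra! hz
  have hz' : z ≤ -1 := by
    have : z < 0 := by exact_mod_cast hz
    omega
  have : (z : ℝ) ≤ -1 := by exact_mod_cast hz'
  nlinarith

lemma exists_pos_add_smul_mem_of_mem_interior {E : Type*} [AddCommGroup E] [Module ℝ E]
    [TopologicalSpace E] [ContinuousAdd E] [ContinuousSMul ℝ E] {A : Set E} {a : E}
    (ha : a ∈ interior A) (w : E) : ∃ t : ℝ, 0 < t ∧ a + t • w ∈ A := by
  have hlim : Filter.Tendsto (fun t : ℝ => a + t • w) (nhdsWithin 0 (Set.Ioi 0)) (nhds a) := by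
    have : Continuous fun t : ℝ => a + t • w := by fun_prop
    simpa using (this.tendsto 0).mono_left nhdsWithin_le_nhds
  obtain ⟨t, htA, ht⟩ := ((hlim.eventually (mem_interior_iff_mem_nhds.mp ha)).and
    self_mem_nhdsWithin).exists
  exact ⟨t, ht, htA⟩

lemma eq_zero_of_dotProduct_nonneg {ι : Type*} [Fintype ι] {A : Set (ι → ℝ)} {v : ι → ℝ}
    (h0 : (0 : ι → ℝ) ∈ interior A) (h : ∀ x ∈ A, 0 ≤ x ⬝ᵥ v) : v = 0 := by
  obtain ⟨t, ht, htA⟩ := exists_pos_add_smul_mem_of_mem_interior h0 (-v)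
  have hpair := h _ htA
  simp only [zero_add, smul_dotProduct, neg_dotProduct, smul_eq_mul] at hpair
  have hvv : 0 ≤ v ⬝ᵥ v := by simpa using dotProduct_self_star_nonneg v
  exact dotProduct_self_eq_zero.mp (by nlinarith)

theorem IsLatticePolytope.eq_zero_of_mem_interior_polar {P : Set (Fin d → ℝ)}
    (hP : IsLatticePolytope P) (h0 : (0 : Fin d → ℝ) ∈ interior P) {v : Fin d → ℝ}
    (hv : v ∈ interior (polar P)) (hvl : IsLatticePt v) : v = 0 := by
  obtain ⟨S, hSl, rfl⟩ := hP
  obtain ⟨δ, hδ, hδv⟩ := exists_pos_add_smul_mem_of_mem_interior hv v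
  have hS : (S : Set (Fin d → ℝ)) ⊆ {x | 0 ≤ x ⬝ᵥ v} := fun s hs => by
    obtain ⟨z, hz⟩ := (hSl s hs).exists_dotProduct_eq_intCast hvl
    have hpair : -1 ≤ (1 + δ) * z := by
      simpa only [pairR_eq_dotProduct, dotProduct_add, dotProduct_smul, smul_eq_mul, hz,
        add_mul, one_mul] using hδv s (subset_convexHull ℝ _ hs)
    change 0 ≤ s ⬝ᵥ v
    exact hz ▸ Int.cast_nonneg_of_neg_one_le_one_add_mul hδ hpair
  have hconvex : Convex ℝ {x : Fin d → ℝ | 0 ≤ x ⬝ᵥ v} :=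
    convex_halfSpace_ge ⟨fun x y => add_dotProduct x y v, fun c x => smul_dotProduct c x v⟩ 0
  exact eq_zero_of_dotProduct_nonneg h0 fun x hx => convexHull_min hS hconvex hx

theorem stmt2_general (Δ₁ Δ₂ : Set (Fin d → ℝ)) (hsub : Δ₁ ⊆ Δ₂) :
    IsGoodPair Δ₁ Δ₂ ↔
      (IsLatticePolytope Δ₁ ∧ (0 : Fin d → ℝ) ∈ interior Δ₁ ∧
        IsLatticePolytope (polar Δ₂) ∧ (0 : Fin d → ℝ) ∈ interior (polar Δ₂)) := by
  constructor
  · rintro ⟨-, ⟨hl₁, h₀₁, -⟩, hl₂, h₀₂, -⟩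
    exact ⟨hl₁, h₀₁, hl₂, h₀₂⟩
  · rintro ⟨hl₁, h₀₁, hl₂, h₀₂⟩
    refine ⟨hsub, ⟨hl₁, h₀₁, fun x hx hxl => ?_⟩, hl₂, h₀₂, fun y hy hyl => ?_⟩
    · exact hl₂.eq_zero_of_mem_interior_polar h₀₂
        (interior_mono (hsub.trans (subset_polar_polar Δ₂)) hx) hxl
    · exact hl₁.eq_zero_of_mem_interior_polar h₀₁ (interior_mono (polar_anti hsub) hy) hyl

/-- For polytopes `Δ₁ ⊆ Δ₂`, `(Δ₁, Δ₂)` is a good pair iff `Δ₁`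
and `Δ₂*` are lattice polytopes containing the origin as an interior point. -/
theorem stmt2 (Δ₁ Δ₂ : Set (Fin d → ℝ)) (h1 : IsPolytope Δ₁) (h2 : IsPolytope Δ₂)
    (hsub : Δ₁ ⊆ Δ₂) :
    IsGoodPair Δ₁ Δ₂ ↔
      (IsLatticePolytope Δ₁ ∧ (0 : Fin d → ℝ) ∈ interior Δ₁ ∧
        IsLatticePolytope (polar Δ₂) ∧ (0 : Fin d → ℝ) ∈ interior (polar Δ₂)) :=
  stmt2_general Δ₁ Δ₂ hsub
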